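/- arXiv:2404.09399 — 4 statements merged into one kernel-verified Lean document; each statement's English description precedes it below -/
import Mathlib

section
/- Let d = p² with p prime. A density matrix ρ on ℂ^d lies in ConvHull(A ∪ B ∪ C) if and only if the following three conditions hold: (i) ρ ∈ KD⁺; (ii) Q_{ij}(ρ) + Q_{kl}(ρ) = Q_{il}(ρ) + Q_{kj}(ρ) for all i,k ∈ ℤ_d with i ≡ k (mod p) and all j,l ∈ ℤ_d; (iii) Q_{ij}(ρ) + Q_{kl}(ρ) = Q_{il}(ρ) + Q_{kj}(ρ) for all j,l ∈ ℤ_d with j ≡ l (mod p) and all i,k ∈ ℤ_d. -/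
open Complex Matrix
open scoped ComplexOrder

noncomputable section

/-- `omega n = exp(2 π i / n)`, a primitive `n`-th root of unity. -/
def omega (n : ℕ) : ℂ := Complex.exp (2 * Real.pi * Complex.I / n)

/-- The standard basis vector `a i` of `ℂ^d`. -/
def stdVec (d : ℕ) (i : Fin d) : Fin d → ℂ := fun k => if k = i then 1 else 0

/-- The Fourier (DFT) basis vector `b j = (1/√d) ∑ i, ω_d^(i j) • a i`. -/
def fourierVec (d : ℕ) (j : Fin d) : Fin d → ℂ :=
  fun i => ((1 / Real.sqrt d : ℝ) : ℂ) * omega d ^ (i.val * j.val)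

/-- The rank-one projector `|v⟩⟨v|` of a vector `v`, as a matrix. -/
def proj (d : ℕ) (v : Fin d → ℂ) : Matrix (Fin d) (Fin d) ℂ :=
  Matrix.of fun i k => v i * (starRingEnd ℂ) (v k)

/-- The Kirkwood-Dirac quasiprobability `Q i j F = ⟨b j|a i⟩ * ⟨a i|F|b j⟩`. -/
def KDQ (d : ℕ) (F : Matrix (Fin d) (Fin d) ℂ) (i j : Fin d) : ℂ :=
  (starRingEnd ℂ) (fourierVec d j i) * ∑ k, F i k * fourierVec d j k

/-- The set `KD⁺` of KD classical density matrices: positive semidefinite, trace one,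
and all KD quasiprobabilities are nonnegative reals. -/
def KDplus (d : ℕ) : Set (Matrix (Fin d) (Fin d) ℂ) :=
  {ρ | ρ.PosSemidef ∧ ρ.trace = 1 ∧
    ∀ i j, (KDQ d ρ i j).im = 0 ∧ 0 ≤ (KDQ d ρ i j).re}

/-- The set `KD^r` of self-adjoint operators whose KD distribution is everywhere real. -/
def KDr (d : ℕ) : Set (Matrix (Fin d) (Fin d) ℂ) :=
  {F | F.IsHermitian ∧ ∀ i j, (KDQ d F i j).im = 0}

/-- `A = {|a i⟩⟨a i| : i ∈ ℤ_d}`. -/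
def setA (d : ℕ) : Set (Matrix (Fin d) (Fin d) ℂ) :=
  {M | ∃ i : Fin d, M = proj d (stdVec d i)}

/-- `B = {|b j⟩⟨b j| : j ∈ ℤ_d}`. -/
def setB (d : ℕ) : Set (Matrix (Fin d) (Fin d) ℂ) :=
  {M | ∃ j : Fin d, M = proj d (fourierVec d j)}

/-- For `d = p * q` : `ψ m s = (1/√q) ∑ k ∈ ℤ_q, ω_q^(s k) • a (k p + m)`
(so the `i`-th coordinate is nonzero iff `i ≡ m [MOD p]`, with `k = i / p`). -/
def psiPQ (d p q : ℕ) (m : Fin p) (s : Fin q) : Fin d → ℂ :=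
  fun i => if i.val % p = m.val then
    ((1 / Real.sqrt q : ℝ) : ℂ) * omega q ^ (s.val * (i.val / p)) else 0

/-- For `d = p * q` : `φ m' s' = (1/√p) ∑ k ∈ ℤ_p, ω_p^(s' k) • a (k q + m')`. -/
def phiPQ (d p q : ℕ) (m' : Fin q) (s' : Fin p) : Fin d → ℂ :=
  fun i => if i.val % q = m'.val then
    ((1 / Real.sqrt p : ℝ) : ℂ) * omega p ^ (s'.val * (i.val / q)) else 0

/-- For `d = p ^ 2` : `C = {|ψ m s⟩⟨ψ m s| : m, s ∈ ℤ_p}`. -/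
def setC2 (d p : ℕ) : Set (Matrix (Fin d) (Fin d) ℂ) :=
  {M | ∃ m s : Fin p, M = proj d (psiPQ d p p m s)}

/-- For `d = p * q` : `C = {|ψ m s⟩⟨ψ m s| : m ∈ ℤ_p, s ∈ ℤ_q}`. -/
def setC (d p q : ℕ) : Set (Matrix (Fin d) (Fin d) ℂ) :=
  {M | ∃ (m : Fin p) (s : Fin q), M = proj d (psiPQ d p q m s)}

/-- For `d = p * q` : `D = {|φ m' s'⟩⟨φ m' s'| : m' ∈ ℤ_q, s' ∈ ℤ_p}`. -/
def setD (d p q : ℕ) : Set (Matrix (Fin d) (Fin d) ℂ) :=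
  {M | ∃ (m' : Fin q) (s' : Fin p), M = proj d (phiPQ d p q m' s')}

/-- Matrix entries in the Fourier basis: `⟨b k|G|b j⟩`. -/
def entryB (d : ℕ) (G : Matrix (Fin d) (Fin d) ℂ) (k j : Fin d) : ℂ :=
  ∑ i, ∑ l, (starRingEnd ℂ) (fourierVec d k i) * G i l * fourierVec d j l

open scoped ComplexConjugate

/-! The KD distribution of each state in `A ∪ B ∪ C` is `1/d` times the indicator of a
"rectangle": a row `{i₀} × ℤ_d` for `A`, a column `ℤ_d × {j₀}` for `B`, and a product of two
residue classes mod `p` for `C`. These satisfy (i)-(iii), which cut out a convex set.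

Conversely, (ii) and (iii) force `Q i j = r i + c j + e (i mod p) (j mod p)`, and the three terms
can be made nonnegative: take `r i = Q i j₀ - Q u j₀` with `u` minimising `Q · j₀` over the
residue class of `i`, `c j = Q i₀ j - Q i₀ v` with `v` minimising `Q i₀ ·` over the class of `j`,
and `e = Q u v ≥ 0`. As the KD distribution determines the operator, `ρ` is then the matching
nonnegative combination of `A`, `B` and `C`, with weights summing to `tr ρ = 1`. -/

lemma sum_pow_eq_ite_of_pow_eq_one {K : Type*} [Field K] [DecidableEq K] {ζ : K} {n : ℕ}
    (h : ζ ^ n = 1) : ∑ t : Fin n, ζ ^ (t : ℕ) = if ζ = 1 then (n : K) else 0 := by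
  split_ifs with h1
  · simp [h1]
  · rw [Fin.sum_univ_eq_sum_range (ζ ^ ·), geom_sum_eq h1, h, sub_self, zero_div]

lemma isPrimitiveRoot_omega {n : ℕ} (hn : n ≠ 0) : IsPrimitiveRoot (omega n) n :=
  Complex.isPrimitiveRoot_exp n hn

lemma norm_omega_pow (n a : ℕ) : ‖omega n ^ a‖ = 1 := by
  rw [norm_pow, omega, Complex.norm_exp]
  simp

lemma conj_omega_pow_mul_self (n a : ℕ) : conj (omega n ^ a) * omega n ^ a = 1 := by
  rw [Complex.conj_mul', norm_omega_pow]
  simp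

lemma omega_pow_eq_of_modEq {n a b : ℕ} (h : a ≡ b [MOD n]) : omega n ^ a = omega n ^ b := by
  rcases eq_or_ne n 0 with rfl | hn
  · rw [Nat.modEq_zero_iff.mp h]
  · have hω := isPrimitiveRoot_omega hn
    rw [← pow_mod_orderOf, ← pow_mod_orderOf (omega n) b, ← hω.eq_orderOf]
    exact congrArg (omega n ^ ·) h

lemma omega_mul_pow_mul_left (p q a : ℕ) (hp : p ≠ 0) : omega (p * q) ^ (p * a) = omega q ^ a := by
  rw [pow_mul, omega, omega, ← Complex.exp_nat_mul]
  congr 2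
  push_cast
  field_simp

lemma omega_pow_mul_of_mod_eq {p q d k m : ℕ} (hd : d = p * q) (hp : p ≠ 0) (hk : k % p = m)
    (j : ℕ) : omega d ^ (k * j) = omega q ^ (k / p * j) * omega d ^ (m * j) := by
  subst hd
  rw [← omega_mul_pow_mul_left p q _ hp, ← pow_add, ← hk]
  congr 1
  conv_lhs => rw [← Nat.div_add_mod k p]
  ring

lemma sum_conj_omega_pow_mul {n : ℕ} (hn : n ≠ 0) (a b : ℕ) :
    ∑ t : Fin n, conj (omega n ^ (t * a)) * omega n ^ (t * b) =
      if a ≡ b [MOD n] then (n : ℂ) else 0 := by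
  have hω := isPrimitiveRoot_omega hn
  have hω0 : omega n ≠ 0 := hω.ne_zero hn
  set ζ := omega n ^ ((b : ℤ) - a)
  have hterm : ∀ t : ℕ, conj (omega n ^ (t * a)) * omega n ^ (t * b) = ζ ^ t := by
    intro t
    rw [← Complex.inv_eq_conj (norm_omega_pow n _), ← zpow_natCast, ← zpow_natCast ζ,
      ← _root_.zpow_mul, ← zpow_natCast, ← _root_.zpow_neg, ← zpow_add₀ hω0]
    congr 1
    push_cast
    ring
  have hζn : ζ ^ n = 1 := by
    rw [← zpow_natCast, ← _root_.zpow_mul, mul_comm, _root_.zpow_mul, zpow_natCast,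
      hω.pow_eq_one, _root_.one_zpow]
  have hζ1 : ζ = 1 ↔ a ≡ b [MOD n] := by
    rw [hω.zpow_eq_one_iff_dvd, Nat.modEq_iff_dvd]
  simp only [hterm, sum_pow_eq_ite_of_pow_eq_one hζn, hζ1]

lemma sum_ite_mod_eq {M : Type*} [AddCommMonoid M] {p q d : ℕ} (hd : d = p * q) (m : Fin p)
    (H : ℕ → M) :
    ∑ i : Fin d, (if i.val % p = m then H (i.val / p) else 0) = ∑ t : Fin q, H t := by
  subst hd
  rw [← (finProdFinEquiv.trans (finCongr (mul_comm q p))).sum_comp, Fintype.sum_prod_type]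
  refine Finset.sum_congr rfl fun t _ => ?_
  have hp : 0 < p := m.pos
  simp [Nat.add_mul_mod_self_left, Nat.mod_eq_of_lt, Nat.add_mul_div_left _ _ hp,
    Nat.div_eq_of_lt, Fin.val_inj]

lemma ofReal_one_div_sqrt_mul_self (n : ℕ) :
    ((1 / √n : ℝ) : ℂ) * ((1 / √n : ℝ) : ℂ) = (n : ℂ)⁻¹ := by
  rw [← Complex.ofReal_mul, div_mul_div_comm, one_mul, Real.mul_self_sqrt (Nat.cast_nonneg n)]
  push_cast
  ring

lemma fourierVec_comm (d : ℕ) (i j : Fin d) : fourierVec d j i = fourierVec d i j := by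
  rw [fourierVec, fourierVec, mul_comm i.val]

lemma conj_fourierVec_mul_self (d : ℕ) (i j : Fin d) :
    conj (fourierVec d j i) * fourierVec d j i = (d : ℂ)⁻¹ := by
  rw [fourierVec, map_mul, Complex.conj_ofReal, mul_mul_mul_comm, conj_omega_pow_mul_self,
    mul_one, ofReal_one_div_sqrt_mul_self]

lemma sum_conj_fourierVec_mul_fourierVec (d : ℕ) (j' j : Fin d) :
    ∑ k, conj (fourierVec d j' k) * fourierVec d j k = if j = j' then 1 else 0 := by
  have hd : d ≠ 0 := j.pos.ne'
  have hterm : ∀ k : Fin d, conj (fourierVec d j' k) * fourierVec d j k =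
      (d : ℂ)⁻¹ * (conj (omega d ^ (k.val * j'.val)) * omega d ^ (k.val * j.val)) := fun k => by
    rw [fourierVec, fourierVec, map_mul, Complex.conj_ofReal, ← ofReal_one_div_sqrt_mul_self]
    ring
  have hmod : j'.val ≡ j.val [MOD d] ↔ j = j' := by
    rw [Nat.ModEq, Nat.mod_eq_of_lt j'.isLt, Nat.mod_eq_of_lt j.isLt, eq_comm, Fin.val_inj]
  simp only [hterm, ← Finset.mul_sum, sum_conj_omega_pow_mul hd, hmod]
  split_ifs <;> simp [hd]

def fourierMatrix (d : ℕ) : Matrix (Fin d) (Fin d) ℂ := Matrix.of fun i j => fourierVec d j i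

lemma fourierMatrix_mul_conjTranspose (d : ℕ) : fourierMatrix d * (fourierMatrix d)ᴴ = 1 := by
  ext i k
  simp only [fourierMatrix, Matrix.mul_apply, Matrix.conjTranspose_apply, Matrix.of_apply,
    fourierVec_comm d i, fourierVec_comm d k, Matrix.one_apply, RCLike.star_def,
    mul_comm (fourierVec d i _), sum_conj_fourierVec_mul_fourierVec]

def KDQLinearMap (d : ℕ) (i j : Fin d) : Matrix (Fin d) (Fin d) ℂ →ₗ[ℂ] ℂ where
  toFun F := KDQ d F i j
  map_add' F G := by simp only [KDQ, Matrix.add_apply, add_mul, Finset.sum_add_distrib, mul_add]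
  map_smul' c F := by
    simp only [KDQ, Matrix.smul_apply, smul_eq_mul, Finset.mul_sum, RingHom.id_apply]
    exact Finset.sum_congr rfl fun k _ => by ring

lemma KDQLinearMap_apply (d : ℕ) (i j : Fin d) (F : Matrix (Fin d) (Fin d) ℂ) :
    KDQLinearMap d i j F = KDQ d F i j := rfl

lemma KDQ_real_smul_add (d : ℕ) (a b : ℝ) (F G : Matrix (Fin d) (Fin d) ℂ) (i j : Fin d) :
    KDQ d (a • F + b • G) i j = a * KDQ d F i j + b * KDQ d G i j := by
  simp only [← KDQLinearMap_apply, map_add, LinearMap.map_smul_of_tower, Complex.real_smul]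

lemma eq_zero_of_KDQ_eq_zero {d : ℕ} {F : Matrix (Fin d) (Fin d) ℂ}
    (h : ∀ i j, KDQ d F i j = 0) : F = 0 := by
  have hFW : F * fourierMatrix d = 0 := by
    ext i j
    -- `KDQ d F i j` unfolds to `conj (fourierVec d j i) * (F * fourierMatrix d) i j`
    have hb : conj (fourierVec d j i) ≠ 0 := by
      have := conj_fourierVec_mul_self d i j
      exact left_ne_zero_of_mul (this ▸ inv_ne_zero (Nat.cast_ne_zero.mpr i.pos.ne'))
    exact (mul_eq_zero.mp (h i j)).resolve_left hb
  rw [← Matrix.mul_one F, ← fourierMatrix_mul_conjTranspose, ← Matrix.mul_assoc, hFW,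
    Matrix.zero_mul]

lemma eq_of_KDQ_eq {d : ℕ} {F G : Matrix (Fin d) (Fin d) ℂ}
    (h : ∀ i j, KDQ d F i j = KDQ d G i j) : F = G := by
  refine sub_eq_zero.mp (eq_zero_of_KDQ_eq_zero fun i j => ?_)
  rw [← KDQLinearMap_apply, map_sub, KDQLinearMap_apply, KDQLinearMap_apply, h, sub_self]

lemma KDQ_proj (d : ℕ) (v : Fin d → ℂ) (i j : Fin d) :
    KDQ d (proj d v) i j =
      conj (fourierVec d j i) * v i * ∑ k, conj (v k) * fourierVec d j k := by
  simp only [KDQ, proj, Matrix.of_apply, mul_assoc, Finset.mul_sum]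

lemma KDQ_proj_stdVec (d : ℕ) (i₀ i j : Fin d) :
    KDQ d (proj d (stdVec d i₀)) i j = if i = i₀ then (d : ℂ)⁻¹ else 0 := by
  split_ifs with h
  · subst h
    simp [KDQ_proj, stdVec, conj_fourierVec_mul_self]
  · simp [KDQ_proj, stdVec, h]

lemma KDQ_proj_fourierVec (d : ℕ) (j₀ i j : Fin d) :
    KDQ d (proj d (fourierVec d j₀)) i j = if j = j₀ then (d : ℂ)⁻¹ else 0 := by
  rw [KDQ_proj, sum_conj_fourierVec_mul_fourierVec]
  split_ifs with h
  · rw [h, mul_one, conj_fourierVec_mul_self]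
  · rw [mul_zero]

lemma trace_proj (d : ℕ) (v : Fin d → ℂ) : (proj d v).trace = ∑ i, v i * conj (v i) := rfl

lemma trace_proj_stdVec (d : ℕ) (i₀ : Fin d) : (proj d (stdVec d i₀)).trace = 1 := by
  simp [trace_proj, stdVec]

lemma trace_proj_fourierVec (d : ℕ) (j : Fin d) : (proj d (fourierVec d j)).trace = 1 := by
  have hd : (d : ℂ) ≠ 0 := Nat.cast_ne_zero.mpr j.pos.ne'
  simp [trace_proj, mul_comm (fourierVec d j _), conj_fourierVec_mul_self, hd]

lemma posSemidef_proj (d : ℕ) (v : Fin d → ℂ) : (proj d v).PosSemidef :=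
  Matrix.posSemidef_vecMulVec_self_star v

section psi

variable {p q d : ℕ} (hd : d = p * q) (m : Fin p) (s : Fin q)
include hd

lemma sum_conj_psiPQ_mul_fourierVec (j : Fin d) :
    ∑ k, conj (psiPQ d p q m s k) * fourierVec d j k =
      if j.val % q = s then
        ((1 / √q : ℝ) : ℂ) * ((1 / √d : ℝ) : ℂ) * q * omega d ^ (m.val * j)
      else 0 := by
  have hp : p ≠ 0 := m.pos.ne'
  set C := ((1 / √q : ℝ) : ℂ) * ((1 / √d : ℝ) : ℂ) * omega d ^ (m.val * j)
  have hterm : ∀ k : Fin d, conj (psiPQ d p q m s k) * fourierVec d j k =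
      if k.val % p = m then
        C * (conj (omega q ^ ((k.val / p) * s)) * omega q ^ ((k.val / p) * j))
      else 0 := by
    intro k
    unfold psiPQ fourierVec
    split_ifs with hk
    · rw [omega_pow_mul_of_mod_eq hd hp hk, map_mul, Complex.conj_ofReal, mul_comm s.val]
      ring
    · rw [map_zero, zero_mul]
  have hmod : s.val ≡ j.val [MOD q] ↔ j.val % q = s := by
    rw [Nat.ModEq, Nat.mod_eq_of_lt s.isLt, eq_comm]
  rw [Finset.sum_congr rfl fun k _ => hterm k,
    sum_ite_mod_eq hd m (fun t => C * (conj (omega q ^ (t * s)) * omega q ^ (t * j))),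
    ← Finset.mul_sum, sum_conj_omega_pow_mul s.pos.ne']
  simp only [hmod]
  split_ifs <;> ring

lemma KDQ_proj_psiPQ (i j : Fin d) :
    KDQ d (proj d (psiPQ d p q m s)) i j =
      if i.val % p = m ∧ j.val % q = s then (d : ℂ)⁻¹ else 0 := by
  have hp : p ≠ 0 := m.pos.ne'
  have hq : (q : ℂ) ≠ 0 := Nat.cast_ne_zero.mpr s.pos.ne'
  rw [KDQ_proj, sum_conj_psiPQ_mul_fourierVec hd]
  by_cases hi : i.val % p = m
  · by_cases hj : j.val % q = s
    · have hij : omega d ^ (i.val * j.val) =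
          omega q ^ (s.val * (i.val / p)) * omega d ^ (m.val * j.val) := by
        rw [omega_pow_mul_of_mod_eq hd hp hi, mul_comm s.val]
        congr 1
        exact omega_pow_eq_of_modEq
          (Nat.ModEq.mul_left _ (hj.trans (Nat.mod_eq_of_lt s.isLt).symm))
      set z := omega q ^ (s.val * (i.val / p)) * omega d ^ (m.val * j.val)
      have hz : conj z * z = 1 := by
        rw [Complex.conj_mul', norm_mul, norm_omega_pow, norm_omega_pow]
        norm_num
      simp only [psiPQ, fourierVec, hi, hj, and_self, if_true, hij, map_mul,
        Complex.conj_ofReal]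
      calc _ = ((1 / √d : ℝ) : ℂ) * ((1 / √d : ℝ) : ℂ) * (((1 / √q : ℝ) : ℂ) *
            ((1 / √q : ℝ) : ℂ)) * q * (conj z * z) := by ring
        _ = (d : ℂ)⁻¹ := by
          rw [ofReal_one_div_sqrt_mul_self, ofReal_one_div_sqrt_mul_self, hz]
          field_simp
    · simp [hj]
  · simp [psiPQ, hi]

lemma trace_proj_psiPQ : (proj d (psiPQ d p q m s)).trace = 1 := by
  have hq : (q : ℂ) ≠ 0 := Nat.cast_ne_zero.mpr s.pos.ne'
  have hterm : ∀ i : Fin d, psiPQ d p q m s i * conj (psiPQ d p q m s i) =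
      if i.val % p = m then (q : ℂ)⁻¹ else 0 := by
    intro i
    unfold psiPQ
    split_ifs
    · rw [map_mul, Complex.conj_ofReal, mul_mul_mul_comm, mul_comm (omega q ^ _),
        conj_omega_pow_mul_self, mul_one, ofReal_one_div_sqrt_mul_self]
    · rw [zero_mul]
  simp only [trace_proj, hterm]
  rw [sum_ite_mod_eq hd m (fun _ => (q : ℂ)⁻¹)]
  simp [hq]

end psi

lemma convex_KDplus (d : ℕ) : Convex ℝ (KDplus d) := by
  rintro F ⟨hF, hFtr, hFQ⟩ G ⟨hG, hGtr, hGQ⟩ a b ha hb hab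
  refine ⟨(hF.smul ha).add (hG.smul hb), ?_, fun i j => ?_⟩
  · rw [Matrix.trace_add, Matrix.trace_smul, Matrix.trace_smul, hFtr, hGtr, Complex.real_smul,
      Complex.real_smul, mul_one, mul_one, ← Complex.ofReal_add, hab, Complex.ofReal_one]
  · rw [KDQ_real_smul_add]
    simp only [add_im, add_re, mul_im, mul_re, ofReal_re, ofReal_im, (hFQ i j).1, (hGQ i j).1,
      mul_zero, zero_mul, add_zero, sub_zero, true_and]
    exact add_nonneg (mul_nonneg ha (hFQ i j).2) (mul_nonneg hb (hGQ i j).2)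

lemma convex_setOf_KDQ_add_eq (d : ℕ) (P : Fin d → Fin d → Fin d → Fin d → Prop) :
    Convex ℝ {F | ∀ i k j l, P i k j l →
      KDQ d F i j + KDQ d F k l = KDQ d F i l + KDQ d F k j} := by
  intro F hF G hG a b _ _ _ i k j l h
  simp only [KDQ_real_smul_add]
  linear_combination (a : ℂ) * hF i k j l h + (b : ℂ) * hG i k j l h

lemma exists_min_on_fiber {ι α : Type*} [Fintype ι] [Nonempty ι] (f : ι → α) (φ : ι → ℝ)
    (a : α) : ∃ u, ∀ i, f i = a → f u = a ∧ φ u ≤ φ i := by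
  classical
  by_cases ha : ∃ i, f i = a
  · obtain ⟨u, hu, hmin⟩ := Finset.exists_min_image (Finset.univ.filter (f · = a)) φ
      (by simpa [Finset.filter_nonempty_iff] using ha)
    exact ⟨u, fun i hi => ⟨(Finset.mem_filter.mp hu).2, hmin i (by simpa using hi)⟩⟩
  · exact ⟨Classical.arbitrary ι, fun i hi => absurd ⟨i, hi⟩ ha⟩

lemma exists_additive_decomposition {ι κ α β : Type*} [Fintype ι] [Fintype κ]
    (f : ι → α) (g : κ → β) (Q : ι → κ → ℝ) (hQ : ∀ i j, 0 ≤ Q i j)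
    (hrow : ∀ i k j l, f i = f k → Q i j + Q k l = Q i l + Q k j)
    (hcol : ∀ i k j l, g j = g l → Q i j + Q k l = Q i l + Q k j) :
    ∃ (r : ι → ℝ) (c : κ → ℝ) (e : α → β → ℝ), (∀ i, 0 ≤ r i) ∧ (∀ j, 0 ≤ c j) ∧
      (∀ a b, 0 ≤ e a b) ∧ ∀ i j, Q i j = r i + c j + e (f i) (g j) := by
  rcases isEmpty_or_nonempty ι with hι | hι
  · exact ⟨0, 0, 0, isEmptyElim, fun _ => le_rfl, fun _ _ => le_rfl, isEmptyElim⟩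
  rcases isEmpty_or_nonempty κ with hκ | hκ
  · exact ⟨0, 0, 0, fun _ => le_rfl, isEmptyElim, fun _ _ => le_rfl, fun _ => isEmptyElim⟩
  have ⟨i₀⟩ := hι
  have ⟨j₀⟩ := hκ
  choose U hU using exists_min_on_fiber f (Q · j₀)
  choose V hV using exists_min_on_fiber g (Q i₀ ·)
  refine ⟨fun i => Q i j₀ - Q (U (f i)) j₀, fun j => Q i₀ j - Q i₀ (V (g j)),
    fun a b => Q (U a) (V b), fun i => sub_nonneg.mpr (hU _ i rfl).2,
    fun j => sub_nonneg.mpr (hV _ j rfl).2, fun a b => hQ _ _, fun i j => ?_⟩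
  have h₁ := hrow i (U (f i)) j j₀ (hU _ i rfl).1.symm
  have h₂ := hcol (U (f i)) i₀ j (V (g j)) (hV _ j rfl).1.symm
  linarith

def kdGenerator (d p : ℕ) : (Fin d ⊕ Fin d) ⊕ (Fin p × Fin p) → Matrix (Fin d) (Fin d) ℂ
  | .inl (.inl i) => proj d (stdVec d i)
  | .inl (.inr j) => proj d (fourierVec d j)
  | .inr (m, s) => proj d (psiPQ d p p m s)

lemma range_kdGenerator (d p : ℕ) :
    Set.range (kdGenerator d p) = setA d ∪ setB d ∪ setC2 d p := by
  ext F
  constructor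
  · rintro ⟨(i | j) | ⟨m, s⟩, rfl⟩
    exacts [.inl (.inl ⟨i, rfl⟩), .inl (.inr ⟨j, rfl⟩), .inr ⟨m, s, rfl⟩]
  · rintro ((⟨i, rfl⟩ | ⟨j, rfl⟩) | ⟨m, s, rfl⟩)
    exacts [⟨.inl (.inl i), rfl⟩, ⟨.inl (.inr j), rfl⟩, ⟨.inr (m, s), rfl⟩]

section generators

variable {p d : ℕ} (hd : d = p * p)
include hd

lemma trace_kdGenerator (x : (Fin d ⊕ Fin d) ⊕ (Fin p × Fin p)) :
    (kdGenerator d p x).trace = 1 := by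
  rcases x with (i | j) | ⟨m, s⟩
  exacts [trace_proj_stdVec d i, trace_proj_fourierVec d j, trace_proj_psiPQ hd m s]

lemma kdGenerator_mem_KDplus (x : (Fin d ⊕ Fin d) ⊕ (Fin p × Fin p)) :
    kdGenerator d p x ∈ KDplus d := by
  refine ⟨?_, trace_kdGenerator hd x, fun i j => ?_⟩
  · rcases x with (i₀ | j₀) | ⟨m, s⟩ <;> exact posSemidef_proj _ _
  · rcases x with (i₀ | j₀) | ⟨m, s⟩ <;>
      simp only [kdGenerator, KDQ_proj_stdVec, KDQ_proj_fourierVec, KDQ_proj_psiPQ hd] <;>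
      split_ifs <;> simp

lemma KDQ_kdGenerator_add_eq (x : (Fin d ⊕ Fin d) ⊕ (Fin p × Fin p)) {i k j l : Fin d}
    (h : i.val % p = k.val % p ∨ j.val % p = l.val % p) :
    KDQ d (kdGenerator d p x) i j + KDQ d (kdGenerator d p x) k l =
      KDQ d (kdGenerator d p x) i l + KDQ d (kdGenerator d p x) k j := by
  rcases x with (i₀ | j₀) | ⟨m, s⟩
  · simp only [kdGenerator, KDQ_proj_stdVec]
  · simp only [kdGenerator, KDQ_proj_fourierVec]
    ring
  · simp only [kdGenerator, KDQ_proj_psiPQ hd]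
    rcases h with h | h <;> simp only [h]
    ring

lemma KDQ_sum_smul_kdGenerator (r c : Fin d → ℝ) (e : ℕ → ℕ → ℝ) (i j : Fin d) :
    KDQ d (∑ x, Sum.elim (Sum.elim r c) (fun ms : Fin p × Fin p => e ms.1 ms.2) x •
      kdGenerator d p x) i j = (d : ℂ)⁻¹ * (r i + c j + e (i.val % p) (j.val % p)) := by
  have hp : 0 < p := Nat.pos_of_mul_pos_left (hd ▸ i.pos)
  rw [← KDQLinearMap_apply, map_sum, Fintype.sum_sum_type, Fintype.sum_sum_type,
    Fintype.sum_prod_type]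
  simp only [Sum.elim_inl, Sum.elim_inr, kdGenerator, LinearMap.map_smul_of_tower,
    KDQLinearMap_apply, KDQ_proj_stdVec, KDQ_proj_fourierVec, KDQ_proj_psiPQ hd,
    Complex.real_smul, mul_ite, mul_zero, ite_and]
  have hi : ∀ a : Fin p, i.val % p = a ↔ ⟨i.val % p, Nat.mod_lt _ hp⟩ = a := fun a => by
    rw [Fin.ext_iff]
  have hj : ∀ a : Fin p, j.val % p = a ↔ ⟨j.val % p, Nat.mod_lt _ hp⟩ = a := fun a => by
    rw [Fin.ext_iff]
  simp only [hi, hj, Finset.sum_ite_irrel, Finset.sum_const_zero, Finset.sum_ite_eq,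
    Finset.mem_univ, if_true]
  ring

lemma trace_sum_smul_kdGenerator (w : (Fin d ⊕ Fin d) ⊕ (Fin p × Fin p) → ℝ) :
    (∑ x, w x • kdGenerator d p x).trace = ∑ x, w x := by
  simp [Matrix.trace_sum, Matrix.trace_smul, trace_kdGenerator hd, Complex.real_smul]

lemma mem_convexHull_range_kdGenerator {ρ : Matrix (Fin d) (Fin d) ℂ} (htr : ρ.trace = 1)
    {r c : Fin d → ℝ} {e : ℕ → ℕ → ℝ} (hr : ∀ i, 0 ≤ r i) (hc : ∀ j, 0 ≤ c j)
    (he : ∀ a b, 0 ≤ e a b) (hρ : ∀ i j, KDQ d ρ i j = r i + c j + e (i.val % p) (j.val % p)) :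
    ρ ∈ convexHull ℝ (Set.range (kdGenerator d p)) := by
  set w := Sum.elim (Sum.elim (d • r) (d • c))
    (fun ms : Fin p × Fin p => (d • e) ms.1 ms.2)
  have hρw : ρ = ∑ x, w x • kdGenerator d p x := by
    refine eq_of_KDQ_eq fun i j => ?_
    have hd0 : (d : ℂ) ≠ 0 := Nat.cast_ne_zero.mpr i.pos.ne'
    rw [KDQ_sum_smul_kdGenerator hd, hρ]
    simp only [Pi.smul_apply, nsmul_eq_mul]
    push_cast
    field_simp
  have hw₁ : ∑ x, w x = 1 := by
    exact_mod_cast (trace_sum_smul_kdGenerator hd w).symm.trans (hρw ▸ htr)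
  have hw₀ : ∀ x, 0 ≤ w x := by
    rintro ((i | j) | ⟨m, s⟩)
    exacts [nsmul_nonneg (hr i) d, nsmul_nonneg (hc j) d, nsmul_nonneg (he m s) d]
  rw [hρw]
  exact (convex_convexHull ℝ _).sum_mem (fun x _ => hw₀ x) hw₁
    (fun x _ => subset_convexHull ℝ _ (Set.mem_range_self x))

end generators

theorem stmt12_general (p d : ℕ) (hd : d = p ^ 2)
    (ρ : Matrix (Fin d) (Fin d) ℂ) :
    ρ ∈ convexHull ℝ (setA d ∪ setB d ∪ setC2 d p) ↔
      (ρ ∈ KDplus d ∧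
        (∀ i k j l : Fin d, i.val % p = k.val % p →
          KDQ d ρ i j + KDQ d ρ k l = KDQ d ρ i l + KDQ d ρ k j) ∧
        (∀ i k j l : Fin d, j.val % p = l.val % p →
          KDQ d ρ i j + KDQ d ρ k l = KDQ d ρ i l + KDQ d ρ k j)) := by
  rw [sq] at hd
  rw [← range_kdGenerator]
  constructor
  · refine fun hρ => convexHull_min ?_ ((convex_KDplus d).inter
      ((convex_setOf_KDQ_add_eq d _).inter (convex_setOf_KDQ_add_eq d _))) hρ
    rintro _ ⟨x, rfl⟩
    exact ⟨kdGenerator_mem_KDplus hd x, fun i k j l h => KDQ_kdGenerator_add_eq hd x (.inl h),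
      fun i k j l h => KDQ_kdGenerator_add_eq hd x (.inr h)⟩
  · rintro ⟨⟨-, htr, hKD⟩, hrow, hcol⟩
    have hre : ∀ i j, KDQ d ρ i j = (KDQ d ρ i j).re := fun i j =>
      Complex.ext rfl (by simp [(hKD i j).1])
    obtain ⟨r, c, e, hr, hc, he, hQ⟩ := exists_additive_decomposition (·.val % p) (·.val % p)
      (fun i j => (KDQ d ρ i j).re) (fun i j => (hKD i j).2)
      (fun i k j l h => by simpa using congrArg Complex.re (hrow i k j l h))
      (fun i k j l h => by simpa using congrArg Complex.re (hcol i k j l h))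
    exact mem_convexHull_range_kdGenerator hd htr hr hc he fun i j => by
      rw [hre, hQ]
      push_cast
      rfl

/-- For `d = p²` with `p` prime, a density matrix `ρ` lies in
`ConvHull(A ∪ B ∪ C)` iff (i) `ρ ∈ KD⁺`, (ii) the KD distribution is additive across
rows congruent mod `p`, and (iii) additive across columns congruent mod `p`. -/
theorem stmt12 (p d : ℕ) (hp : p.Prime) (hd : d = p ^ 2)
    (ρ : Matrix (Fin d) (Fin d) ℂ) (hpos : ρ.PosSemidef) (htr : ρ.trace = 1) :
    ρ ∈ convexHull ℝ (setA d ∪ setB d ∪ setC2 d p) ↔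
      (ρ ∈ KDplus d ∧
        (∀ i k j l : Fin d, i.val % p = k.val % p →
          KDQ d ρ i j + KDQ d ρ k l = KDQ d ρ i l + KDQ d ρ k j) ∧
        (∀ i k j l : Fin d, j.val % p = l.val % p →
          KDQ d ρ i j + KDQ d ρ k l = KDQ d ρ i l + KDQ d ρ k j)) :=
  stmt12_general p d hd ρ
end
end

section
/- Let d = pq with p, q positive integers, and for m ∈ ℤ_p, s ∈ ℤ_q let ψ_{ms} = (1/√q) ∑_{k∈ℤ_q} ω_q^{sk} a_{kp+m}. Then the rank-one projector |ψ_{ms}⟩⟨ψ_{ms}| is KD classical: Q_{ij}(|ψ_{ms}⟩⟨ψ_{ms}|) is a nonnegative real number for all i,j ∈ ℤ_d. -/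
open Complex Matrix
open scoped ComplexOrder

noncomputable section

/-- The standard basis vector `a i` of `ℂ^d`. -/

lemma omega_prim {n : ℕ} (hn : 0 < n) : IsPrimitiveRoot (omega n) n :=
  Complex.isPrimitiveRoot_exp n hn.ne'

lemma omega_pow_eq_one {n : ℕ} (hn : 0 < n) {k : ℕ} (h : n ∣ k) : omega n ^ k = 1 :=
  ((omega_prim hn).pow_eq_one_iff_dvd k).2 h

lemma omega_conj {n : ℕ} (hn : 0 < n) :
    (starRingEnd ℂ) (omega n) = omega n ^ (n - 1) := by
  have h1 : omega n ^ (n-1) * omega n = 1 := by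
    rw [← pow_succ]
    rw [Nat.sub_add_cancel hn]
    exact omega_pow_eq_one hn dvd_rfl
  have h2 : (starRingEnd ℂ) (omega n) = (omega n)⁻¹ := by
    unfold omega
    rw [← Complex.exp_conj, ← Complex.exp_neg]
    congr 1
    simp only [map_div₀, _root_.map_mul, Complex.conj_I, Complex.conj_ofReal,
      map_ofNat, map_natCast]
    ring
  rw [h2]
  exact inv_eq_of_mul_eq_one_left h1

lemma omega_conj_pow {n : ℕ} (hn : 0 < n) (k : ℕ) :
    (starRingEnd ℂ) (omega n ^ k) = omega n ^ ((n - 1) * k) := by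
  rw [map_pow, omega_conj hn, ← pow_mul]

lemma omega_mul_pow {p q : ℕ} (hp : 0 < p) (hq : 0 < q) :
    omega (p*q) ^ p = omega q := by
  unfold omega
  rw [← Complex.exp_nat_mul]
  congr 1
  have hp' : (p:ℂ) ≠ 0 := Nat.cast_ne_zero.2 hp.ne'
  have hq' : (q:ℂ) ≠ 0 := Nat.cast_ne_zero.2 hq.ne'
  push_cast
  field_simp

def resEquiv (p q : ℕ) (hp : 0 < p) : Fin q × Fin p ≃ Fin (p*q) where
  toFun x := ⟨x.2.val + p * x.1.val, by
    calc x.2.val + p * x.1.val < p + p * x.1.val := by omega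
    _ = p * (x.1.val + 1) := by ring
    _ ≤ p * q := Nat.mul_le_mul_left p x.1.isLt⟩
  invFun k := (⟨k.val / p, Nat.div_lt_of_lt_mul (by have := k.isLt; omega)⟩,
    ⟨k.val % p, Nat.mod_lt _ hp⟩)
  left_inv := by
    rintro ⟨b, a⟩
    ext <;> simp [Nat.add_mul_div_left _ _ hp, Nat.div_eq_of_lt a.isLt,
      Nat.add_mul_mod_self_left, Nat.mod_eq_of_lt a.isLt]
  right_inv := by
    rintro k
    ext
    simp [Nat.mod_add_div]

/-- For `d = pq` (`p, q` positive integers), each projector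
`|ψ_{ms}⟩⟨ψ_{ms}|` is KD classical: all its KD quasiprobabilities are nonnegative reals. -/
theorem stmt15 (p q d : ℕ) (hp : 0 < p) (hq : 0 < q) (hd : d = p * q)
    (m : Fin p) (s : Fin q) (i j : Fin d) :
    (KDQ d (proj d (psiPQ d p q m s)) i j).im = 0 ∧
      0 ≤ (KDQ d (proj d (psiPQ d p q m s)) i j).re := by
  subst hd
  by_cases hi : i.val % p = m.val
  case neg =>
    have hz : KDQ (p*q) (proj (p*q) (psiPQ (p*q) p q m s)) i j = 0 := by
      unfold KDQ proj psiPQ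
      simp [hi]
    rw [hz]; simp
  case pos =>
    have hpq : 0 < p*q := Nat.mul_pos hp hq
    set z : ℂ := omega q ^ (s.val * (q-1) + j.val) with hzdef
    have hmod : ∀ (b : Fin q) (a : Fin p), (a.val + p*b.val) % p = a.val := fun b a => by
      simp [Nat.add_mul_mod_self_left, Nat.mod_eq_of_lt a.isLt]
    have hdiv : ∀ (b : Fin q) (a : Fin p), (a.val + p*b.val) / p = b.val := fun b a => by
      simp [Nat.add_mul_div_left _ _ hp, Nat.div_eq_of_lt a.isLt]
    have hterm : ∀ (b : Fin q) (a : Fin p),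
        proj (p*q) (psiPQ (p*q) p q m s) i (resEquiv p q hp (b,a))
          * fourierVec (p*q) j (resEquiv p q hp (b,a))
        = if a = m then psiPQ (p*q) p q m s i
            * (((1 / Real.sqrt (q : ℕ) : ℝ) : ℂ) * ((1 / Real.sqrt ((p*q : ℕ) : ℝ) : ℝ) : ℂ) * omega (p*q) ^ (m.val*j.val) * z ^ b.val) else 0 := by
      intro b a
      simp only [proj, Matrix.of_apply, psiPQ, fourierVec, resEquiv, Equiv.coe_fn_mk,
        hmod b a, hdiv b a]
      by_cases ha : a = m
      · rw [if_pos hi, if_pos (show (a.val : ℕ) = m.val from congrArg Fin.val ha),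
          if_pos ha]
        rw [_root_.map_mul, Complex.conj_ofReal, omega_conj_pow hq]
        have h1 : omega (p*q) ^ (m.val*j.val) * omega q ^ (b.val*j.val)
            = omega (p*q) ^ ((a.val + p*b.val) * j.val) := by
          rw [← omega_mul_pow hp hq, ← pow_mul, ← pow_add]
          congr 1
          rw [ha]; ring
        have hzb : z ^ b.val = omega q ^ ((q-1)*(s.val*b.val)) * omega q ^ (b.val*j.val) := by
          rw [hzdef, ← pow_mul, ← pow_add]
          congr 1
          ring
        rw [hzb, ← h1]
        ring
      · rw [if_neg (show ¬((a.val : ℕ) = m.val) from fun h => ha (Fin.ext h))]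
        simp [ha]
    have hsum : ∑ k, proj (p*q) (psiPQ (p*q) p q m s) i k * fourierVec (p*q) j k
        = psiPQ (p*q) p q m s i
            * (((1 / Real.sqrt (q : ℕ) : ℝ) : ℂ) * ((1 / Real.sqrt ((p*q : ℕ) : ℝ) : ℝ) : ℂ) * omega (p*q) ^ (m.val*j.val) * ∑ t ∈ Finset.range q, z ^ t) := by
      rw [← Fintype.sum_equiv (resEquiv p q hp)
        (fun x => proj (p*q) (psiPQ (p*q) p q m s) i (resEquiv p q hp x)
          * fourierVec (p*q) j (resEquiv p q hp x)) _ (fun x => rfl)]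
      rw [Fintype.sum_prod_type]
      simp only [hterm]
      simp only [Finset.sum_ite_eq' Finset.univ m, Finset.mem_univ, if_true]
      rw [← Finset.sum_range fun t => psiPQ (p*q) p q m s i
            * (((1 / Real.sqrt (q : ℕ) : ℝ) : ℂ) * ((1 / Real.sqrt ((p*q : ℕ) : ℝ) : ℝ) : ℂ) * omega (p*q) ^ (m.val*j.val) * z ^ t)]
      rw [Finset.mul_sum, Finset.mul_sum]
    unfold KDQ
    rw [hsum]
    by_cases hz1 : z = 1
    · have hqd : q ∣ s.val * (q-1) + j.val := by
        rw [← (omega_prim hq).pow_eq_one_iff_dvd]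
        exact hzdef ▸ hz1
      obtain ⟨c, hc⟩ := hqd
      have hgeom : ∑ t ∈ Finset.range q, z ^ t = (q : ℂ) := by
        simp [hz1]
      rw [hgeom]
      have hfi : (starRingEnd ℂ) (fourierVec (p*q) j i)
          = ((1 / Real.sqrt ((p*q : ℕ) : ℝ) : ℝ) : ℂ) * omega (p*q) ^ (((p*q)-1) * (i.val*j.val)) := by
        unfold fourierVec
        rw [_root_.map_mul, Complex.conj_ofReal, omega_conj_pow hpq]
      have hpsi : psiPQ (p*q) p q m s i = ((1 / Real.sqrt (q : ℕ) : ℝ) : ℂ) * omega (p*q) ^ (p * (s.val * (i.val/p))) := by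
        unfold psiPQ
        rw [if_pos hi, show omega (p*q) ^ (p * (s.val * (i.val/p)))
          = omega q ^ (s.val * (i.val/p)) from by rw [pow_mul, omega_mul_pow hp hq]]
      have hiv : p * (i.val / p) + m.val = i.val := by
        have h0 := Nat.div_add_mod i.val p
        rw [hi] at h0
        exact h0
      have hE : omega (p*q) ^ (((p*q)-1) * (i.val*j.val)) * omega (p*q) ^ (p * (s.val * (i.val/p)))
          * omega (p*q) ^ (m.val*j.val) = 1 := by
        rw [← pow_add, ← pow_add]
        apply omega_pow_eq_one hpq
        obtain ⟨u, hu⟩ : ∃ u, i.val / p = u := ⟨_, rfl⟩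
        rw [hu] at hiv ⊢
        rw [← Int.natCast_dvd_natCast]
        push_cast [Nat.cast_sub hpq]
        have hiv' : (p:ℤ) * (u:ℤ) + (m.val:ℤ) = (i.val:ℤ) := by exact_mod_cast hiv
        have hc' : (s.val:ℤ) * ((q:ℤ)-1) + (j.val:ℤ) = (q:ℤ) * c := by
          have h2 := hc
          zify [hq] at h2
          linarith
        refine ⟨(i.val:ℤ) * j.val - (u:ℤ) * ((c:ℤ) - s.val), ?_⟩
        linear_combination ((j.val:ℤ)) * hiv' + (-(p:ℤ) * (u:ℤ)) * hc'
      have hnum : ((1 / Real.sqrt ((p*q : ℕ) : ℝ) : ℝ) : ℂ) * ((1 / Real.sqrt ((p*q : ℕ) : ℝ) : ℝ) : ℂ) * (((1 / Real.sqrt (q : ℕ) : ℝ) : ℂ) * ((1 / Real.sqrt (q : ℕ) : ℝ) : ℂ) * (q:ℂ)) = ((((p:ℝ)*q)⁻¹ : ℝ) : ℂ) := by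
        rw [← Complex.ofReal_mul, ← Complex.ofReal_mul]
        rw [show (1 / Real.sqrt ((p*q : ℕ) : ℝ)) * (1 / Real.sqrt ((p*q : ℕ) : ℝ))
            = 1 / ((p:ℝ)*q) from by
          rw [div_mul_div_comm, Real.mul_self_sqrt (by positivity), one_mul]; push_cast; ring]
        rw [show (1 / Real.sqrt (q : ℕ)) * (1 / Real.sqrt (q : ℕ)) = 1 / (q:ℝ) from by
          rw [div_mul_div_comm, Real.mul_self_sqrt (by positivity), one_mul]]
        have hq' : (q:ℂ) ≠ 0 := Nat.cast_ne_zero.2 hq.ne'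
        have hp' : (p:ℂ) ≠ 0 := Nat.cast_ne_zero.2 hp.ne'
        push_cast
        field_simp
      have hval : (starRingEnd ℂ) (fourierVec (p*q) j i)
          * (psiPQ (p*q) p q m s i * (((1 / Real.sqrt (q : ℕ) : ℝ) : ℂ) * ((1 / Real.sqrt ((p*q : ℕ) : ℝ) : ℝ) : ℂ) * omega (p*q) ^ (m.val*j.val) * (q:ℂ)))
          = ((((p:ℝ)*q)⁻¹ : ℝ) : ℂ) := by
        rw [hfi, hpsi, ← hnum]
        calc ((1 / Real.sqrt ((p*q : ℕ) : ℝ) : ℝ) : ℂ) * omega (p*q) ^ (((p*q)-1) * (i.val*j.val))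
            * (((1 / Real.sqrt (q : ℕ) : ℝ) : ℂ) * omega (p*q) ^ (p * (s.val * (i.val/p)))
              * (((1 / Real.sqrt (q : ℕ) : ℝ) : ℂ) * ((1 / Real.sqrt ((p*q : ℕ) : ℝ) : ℝ) : ℂ) * omega (p*q) ^ (m.val*j.val) * (q:ℂ)))
            = ((1 / Real.sqrt ((p*q : ℕ) : ℝ) : ℝ) : ℂ) * ((1 / Real.sqrt ((p*q : ℕ) : ℝ) : ℝ) : ℂ) * (((1 / Real.sqrt (q : ℕ) : ℝ) : ℂ) * ((1 / Real.sqrt (q : ℕ) : ℝ) : ℂ) * (q:ℂ)) * (omega (p*q) ^ (((p*q)-1) * (i.val*j.val))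
              * omega (p*q) ^ (p * (s.val * (i.val/p))) * omega (p*q) ^ (m.val*j.val)) := by
              ring
          _ = ((1 / Real.sqrt ((p*q : ℕ) : ℝ) : ℝ) : ℂ) * ((1 / Real.sqrt ((p*q : ℕ) : ℝ) : ℝ) : ℂ) * (((1 / Real.sqrt (q : ℕ) : ℝ) : ℂ) * ((1 / Real.sqrt (q : ℕ) : ℝ) : ℂ) * (q:ℂ)) := by rw [hE, mul_one]
      rw [hval]
      constructor
      · simp
      · simp only [Complex.ofReal_re]
        positivity
    · have hzq : z ^ q = 1 := by
        rw [hzdef, ← pow_mul, mul_comm]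
        exact omega_pow_eq_one hq (Dvd.intro _ rfl)
      have hgeom : ∑ t ∈ Finset.range q, z ^ t = 0 := by
        rw [geom_sum_eq hz1, hzq, sub_self, zero_div]
      rw [hgeom]
      simp
end
end

section
/- Let d ≥ 1 and let F be a self-adjoint operator on ℂ^d with Q_{ij}(F) real for all i,j ∈ ℤ_d (F ∈ KD^r). Then for all i, k, l ∈ ℤ_d one has F_{(i+lk),(i+(l+1)k)} = F_{i,(i+k)}, where F_{ik} = ⟨a_i|F|a_k⟩ and indices are taken mod d; in particular all entries along any 'cyclic diagonal chain' with step k are equal. -/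
open Complex Matrix
open scoped ComplexOrder

noncomputable section

/-! For Hermitian `F`, `Q_{ij}(F) = d⁻¹ ∑ₘ F_{i,i+m} ω^{mj}` while its complex conjugate is
`d⁻¹ ∑ₘ F_{i-m,i} ω^{mj}`. Reality of the KD distribution and injectivity of the discrete
Fourier transform (a Vandermonde matrix at the distinct `d`-th roots of unity) give
`F_{i,i+m} = F_{i-m,i}`, i.e. `a ↦ F_{a,a+k}` is `k`-periodic. -/

namespace KirkwoodDirac

variable {d : ℕ} [NeZero d]

lemma isPrimitiveRoot_omega : IsPrimitiveRoot (omega d) d :=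
  Complex.isPrimitiveRoot_exp d (NeZero.ne d)

lemma conj_omega_pow_mul_self (n : ℕ) : starRingEnd ℂ (omega d ^ n) * omega d ^ n = 1 := by
  rw [Complex.conj_mul', norm_pow, isPrimitiveRoot_omega.norm'_eq_one (NeZero.ne d)]
  simp

lemma omega_pow_add_mul (a b : Fin d) (n : ℕ) :
    omega d ^ ((a + b).val * n) = omega d ^ (a.val * n) * omega d ^ (b.val * n) := by
  rw [← pow_add, ← add_mul, Fin.val_add,
    (isPrimitiveRoot_omega.isOfFinOrder (NeZero.ne d)).pow_eq_pow_iff_modEq,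
    ← isPrimitiveRoot_omega.eq_orderOf]
  exact (Nat.mod_modEq _ d).mul_right n

lemma eq_of_forall_sum_mul_omega_pow_eq {f g : Fin d → ℂ}
    (h : ∀ j : Fin d,
      ∑ m, f m * omega d ^ (m.val * j.val) = ∑ m, g m * omega d ^ (m.val * j.val)) : f = g := by
  have hinj : Function.Injective fun j : Fin d => omega d ^ j.val := fun j j' hjj' =>
    Fin.ext (isPrimitiveRoot_omega.pow_inj j.isLt j'.isLt hjj')
  refine sub_eq_zero.mp (Matrix.eq_zero_of_forall_index_sum_mul_pow_eq_zero hinj fun j => ?_)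
  simp only [Pi.sub_apply, sub_mul, Finset.sum_sub_distrib, ← pow_mul, mul_comm j.val, h j,
    sub_self]

lemma fourierVec_add (j i m : Fin d) :
    fourierVec d j (i + m) = fourierVec d j i * omega d ^ (m.val * j.val) := by
  simp only [fourierVec, omega_pow_add_mul, mul_assoc]

lemma conj_fourierVec_mul_self (j i : Fin d) :
    starRingEnd ℂ (fourierVec d j i) * fourierVec d j i = (d : ℂ)⁻¹ := by
  calc starRingEnd ℂ (fourierVec d j i) * fourierVec d j i
      = ((1 / Real.sqrt d : ℝ) : ℂ) ^ 2 *
          (starRingEnd ℂ (omega d ^ (i.val * j.val)) * omega d ^ (i.val * j.val)) := by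
        simp only [fourierVec, map_mul, Complex.conj_ofReal]
        ring
    _ = (d : ℂ)⁻¹ := by
        rw [conj_omega_pow_mul_self, mul_one, ← Complex.ofReal_pow, div_pow,
          Real.sq_sqrt (Nat.cast_nonneg d)]
        simp

lemma KDQ_eq_sum_add (F : Matrix (Fin d) (Fin d) ℂ) (i j : Fin d) :
    KDQ d F i j = (d : ℂ)⁻¹ * ∑ m, F i (i + m) * omega d ^ (m.val * j.val) := by
  rw [KDQ, ← Equiv.sum_comp (Equiv.addLeft i), Finset.mul_sum, Finset.mul_sum]
  refine Finset.sum_congr rfl fun m _ => ?_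
  rw [Equiv.coe_addLeft, fourierVec_add, ← conj_fourierVec_mul_self j i]
  ring

lemma conj_KDQ_eq_sum_sub (F : Matrix (Fin d) (Fin d) ℂ) (i j : Fin d) :
    starRingEnd ℂ (KDQ d F i j) =
      (d : ℂ)⁻¹ * ∑ m, Fᴴ (i - m) i * omega d ^ (m.val * j.val) := by
  rw [KDQ, map_mul, map_sum, Complex.conj_conj, ← Equiv.sum_comp (Equiv.subLeft i),
    Finset.mul_sum, Finset.mul_sum]
  refine Finset.sum_congr rfl fun m _ => ?_
  conv_lhs => rw [Equiv.subLeft_apply, ← sub_add_cancel i m, fourierVec_add, sub_add_cancel]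
  rw [conjTranspose_apply, Complex.star_def, ← conj_fourierVec_mul_self j (i - m), map_mul]
  ring

lemma apply_self_add_eq_apply_sub_self {F : Matrix (Fin d) (Fin d) ℂ} (hF : F.IsHermitian)
    (hKD : ∀ i j, (KDQ d F i j).im = 0) (i m : Fin d) : F i (i + m) = F (i - m) i := by
  refine congrFun (eq_of_forall_sum_mul_omega_pow_eq (f := fun m => F i (i + m))
    (g := fun m => F (i - m) i) fun j => ?_) m
  have hreal : starRingEnd ℂ (KDQ d F i j) = KDQ d F i j := Complex.conj_eq_iff_im.mpr (hKD i j)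
  rw [conj_KDQ_eq_sum_sub, KDQ_eq_sum_add, hF.eq] at hreal
  exact (mul_left_cancel₀ (inv_ne_zero (Nat.cast_ne_zero.mpr (NeZero.ne d))) hreal).symm

end KirkwoodDirac

/-- For `d ≥ 1` and `F ∈ KD^r` self-adjoint, all entries along any
cyclic diagonal chain with step `k` are equal: `F_{(i+lk),(i+(l+1)k)} = F_{i,(i+k)}`. -/
theorem stmt16 (d : ℕ) [NeZero d] (F : Matrix (Fin d) (Fin d) ℂ)
    (hF : F.IsHermitian) (hKD : ∀ i j, (KDQ d F i j).im = 0) :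
    ∀ i k l : Fin d, F (i + l * k) (i + (l + 1) * k) = F i (i + k) := by
  intro i k l
  have hperiodic : Function.Periodic (fun a => F a (a + k)) k := fun a => by
    simpa using KirkwoodDirac.apply_self_add_eq_apply_sub_self hF hKD (a + k) k
  open Fin.CommRing in
  simpa [add_mul, add_assoc] using hperiodic.nat_mul l.val i
end
end

section
/- Let d be even and let F be a self-adjoint operator on ℂ^d with Q_{ij}(F) real for all i,j ∈ ℤ_d (F ∈ KD^r). Then for every i ∈ ℤ_d the entry F_{i,(i+d/2)} = ⟨a_i|F|a_{i+d/2}⟩ (index mod d) is a real number. -/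
open Complex Matrix
open scoped ComplexOrder

noncomputable section

/-!
Up to the normalisation `1/d`, the `i`-th row of the KD distribution is the discrete Fourier
transform of the `i`-th row of `F`, so it can be inverted:
`F i (i - m) = ∑ j, Q i j (F) * ω_d ^ (j m)`. For `m = d/2` the weights `ω_d ^ (j m) = (-1) ^ j`
are real and `i - d/2 = i + d/2`, so a real KD distribution forces a real entry.
-/

section KirkwoodDirac

variable {d : ℕ}

lemma conj_omega : starRingEnd ℂ (omega d) = (omega d)⁻¹ := by
  rw [omega, ← Complex.exp_conj, ← Complex.exp_neg]
  simp [map_div₀, neg_div, map_ofNat]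

lemma ofReal_one_div_sqrt_mul_self_s17 :
    ((1 / √d : ℝ) : ℂ) * ((1 / √d : ℝ) : ℂ) = 1 / d := by
  rw [← Complex.ofReal_mul, div_mul_div_comm, one_mul, Real.mul_self_sqrt d.cast_nonneg]
  push_cast
  rfl

lemma sum_fin_pow_eq_ite {K : Type*} [Field K] [DecidableEq K] {z : K} (hz : z ^ d = 1) :
    ∑ j : Fin d, z ^ j.val = if z = 1 then (d : K) else 0 := by
  rw [Fin.sum_univ_eq_sum_range (z ^ ·)]
  split_ifs with h
  · simp [h]
  · rw [geom_sum_eq h, hz, sub_self, zero_div]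

lemma KDQ_mul_omega_pow (F : Matrix (Fin d) (Fin d) ℂ) (i j m : Fin d) :
    KDQ d F i j * omega d ^ (j.val * m.val) =
      ∑ k, F i k / d * (omega d ^ k.val * omega d ^ m.val / omega d ^ i.val) ^ j.val := by
  simp only [KDQ, fourierVec, map_mul, Complex.conj_ofReal, map_pow, conj_omega, Finset.mul_sum,
    Finset.sum_mul]
  refine Finset.sum_congr rfl fun k _ => ?_
  rw [div_pow, mul_pow, ← pow_mul, ← pow_mul, ← pow_mul, inv_pow, mul_comm j.val m.val,
    div_eq_mul_one_div (F i k), ← ofReal_one_div_sqrt_mul_self_s17]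
  ring

variable [NeZero d]

lemma isPrimitiveRoot_omega_s17 : IsPrimitiveRoot (omega d) d :=
  Complex.isPrimitiveRoot_exp d (NeZero.ne d)

lemma omega_pow_div_two (hd : Even d) : omega d ^ (d / 2) = -1 := by
  apply IsPrimitiveRoot.eq_neg_one_of_two_right
  have h := isPrimitiveRoot_omega_s17.pow_of_dvd
    (by have := NeZero.ne d; obtain ⟨r, hr⟩ := hd; omega) (Nat.div_dvd_of_dvd hd.two_dvd)
  rwa [Nat.div_div_self hd.two_dvd (NeZero.ne d)] at h

lemma omega_pow_val_add (k m : Fin d) :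
    omega d ^ (k + m).val = omega d ^ k.val * omega d ^ m.val := by
  rw [Fin.val_add, ← pow_eq_pow_mod _ isPrimitiveRoot_omega_s17.pow_eq_one, pow_add]

lemma omega_pow_val_injective : Function.Injective fun k : Fin d => omega d ^ k.val :=
  fun _ _ h => Fin.ext (isPrimitiveRoot_omega_s17.pow_inj (Fin.isLt _) (Fin.isLt _) h)

lemma omega_pow_val_mul_div_eq_one_iff (i k m : Fin d) :
    omega d ^ k.val * omega d ^ m.val / omega d ^ i.val = 1 ↔ k = i - m := by
  rw [div_eq_one_iff_eq (pow_ne_zero _ (isPrimitiveRoot_omega_s17.ne_zero (NeZero.ne d))),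
    ← omega_pow_val_add, omega_pow_val_injective.eq_iff, eq_sub_iff_add_eq]

lemma omega_pow_pow_self (a : ℕ) : (omega d ^ a) ^ d = 1 := by
  rw [← pow_mul, mul_comm, pow_mul, isPrimitiveRoot_omega_s17.pow_eq_one, one_pow]

theorem sum_KDQ_mul_omega_pow (F : Matrix (Fin d) (Fin d) ℂ) (i m : Fin d) :
    ∑ j, KDQ d F i j * omega d ^ (j.val * m.val) = F i (i - m) := by
  have hroot (k : Fin d) : (omega d ^ k.val * omega d ^ m.val / omega d ^ i.val) ^ d = 1 := by
    rw [div_pow, mul_pow, omega_pow_pow_self, omega_pow_pow_self, omega_pow_pow_self]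
    norm_num
  simp only [KDQ_mul_omega_pow]
  rw [Finset.sum_comm]
  simp only [← Finset.mul_sum, sum_fin_pow_eq_ite (hroot _), omega_pow_val_mul_div_eq_one_iff,
    mul_ite, mul_zero, Finset.sum_ite_eq', Finset.mem_univ, if_true]
  exact div_mul_cancel₀ _ (Nat.cast_ne_zero.2 (NeZero.ne d))

end KirkwoodDirac

open Fin.NatCast in
theorem stmt17_general (d : ℕ) [NeZero d] (hd : Even d) (F : Matrix (Fin d) (Fin d) ℂ)
    (hKD : ∀ i j, (KDQ d F i j).im = 0) :
    ∀ i : Fin d, (F i (i + (↑(d / 2) : Fin d))).im = 0 := by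
  intro i
  set half : Fin d := ↑(d / 2)
  have hval : half.val = d / 2 :=
    Fin.val_cast_of_lt (Nat.div_lt_self (Nat.pos_of_neZero d) one_lt_two)
  have hneg_half : -half = half := neg_eq_of_add_eq_zero_right <| Fin.ext <| by
    rw [Fin.val_add, hval, ← two_mul, Nat.mul_div_cancel' hd.two_dvd, Nat.mod_self, Fin.val_zero]
  rw [← hneg_half, ← sub_eq_add_neg, ← sum_KDQ_mul_omega_pow F i half, Complex.im_sum]
  refine Finset.sum_eq_zero fun j _ => ?_
  rw [hval, pow_mul', omega_pow_div_two hd, Complex.mul_im, hKD, zero_mul, add_zero]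
  exact mul_eq_zero_of_right _ (by exact_mod_cast Complex.ofReal_im ((-1 : ℝ) ^ j.val))

open Fin.NatCast in
/-- For even `d ≥ 1` and `F ∈ KD^r` self-adjoint, every entry
`F_{i,(i+d/2)}` is real. -/
theorem stmt17 (d : ℕ) [NeZero d] (hd : Even d) (F : Matrix (Fin d) (Fin d) ℂ)
    (hF : F.IsHermitian) (hKD : ∀ i j, (KDQ d F i j).im = 0) :
    ∀ i : Fin d, (F i (i + (↑(d / 2) : Fin d))).im = 0 :=
  stmt17_general d hd F hKD
end
end
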